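/- The following three compositions define the same third-order operator L (with principal symbol (X+Y)XY) on smooth functions ℝ² → ℝ: L = (D_x + D_y + x) ∘ (D_xy + y·D_x + y²·D_y + y³), L = (D_xx + D_xy + (x+y²)·D_x + y²·D_y + (xy²+2y)) ∘ (D_y + y), and L = (D_x + D_y + x) ∘ (D_x + y²) ∘ (D_y + y). Thus L has a first-order left factor of symbol X+Y, a first-order right factor of symbol Y, and a complete factorization into three first-order factors whose outer factors are exactly these factors. -/

import Mathlib

/-- Operators act on functions `ℝ × ℝ → ℝ`. -/
abbrev Fn := ℝ × ℝ → ℝ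

/-- Partial derivative in the first coordinate direction. -/
noncomputable def Dx (u : Fn) : Fn := fun p => fderiv ℝ u p (1, 0)

/-- Partial derivative in the second coordinate direction. -/
noncomputable def Dy (u : Fn) : Fn := fun p => fderiv ℝ u p (0, 1)

/-- The first coordinate function `x`. -/
def xf : Fn := fun p => p.1

/-- The second coordinate function `y`. -/
def yf : Fn := fun p => p.2

/-- Smoothness of a function `ℝ × ℝ → ℝ`. -/
def IsSmooth (u : Fn) : Prop := ContDiff ℝ (⊤ : ℕ∞) u

/-- First factorization: `(D_x + D_y + x) ∘ (D_xy + y·D_x + y²·D_y + y³)`. -/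
noncomputable def comp1 (u : Fn) : Fn :=
  (fun v => Dx v + Dy v + xf * v)
    (Dx (Dy u) + yf * Dx u + yf ^ 2 * Dy u + yf ^ 3 * u)

/-- Second factorization:
`(D_xx + D_xy + (x+y²)·D_x + y²·D_y + (xy²+2y)) ∘ (D_y + y)`. -/
noncomputable def comp2 (u : Fn) : Fn :=
  (fun v => Dx (Dx v) + Dx (Dy v) + (xf + yf ^ 2) * Dx v + yf ^ 2 * Dy v +
      (xf * yf ^ 2 + 2 * yf) * v)
    (Dy u + yf * u)

/-- Complete factorization: `(D_x + D_y + x) ∘ (D_x + y²) ∘ (D_y + y)`. -/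
noncomputable def comp3 (u : Fn) : Fn :=
  (fun v => Dx v + Dy v + xf * v)
    ((fun v => Dx v + yf ^ 2 * v)
      ((fun v => Dy v + yf * v) u))

lemma smooth_yf : IsSmooth yf := contDiff_snd
lemma IsSmooth.diffble {u : Fn} (h : IsSmooth u) : Differentiable ℝ u := h.differentiable (by simp)
lemma IsSmooth.dx {u : Fn} (h : IsSmooth u) : IsSmooth (Dx u) :=
  (h.fderiv_right (by simp)).clm_apply contDiff_const
lemma IsSmooth.dy {u : Fn} (h : IsSmooth u) : IsSmooth (Dy u) :=
  (h.fderiv_right (by simp)).clm_apply contDiff_const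
lemma IsSmooth.addf {u v : Fn} (hu : IsSmooth u) (hv : IsSmooth v) : IsSmooth (u + v) :=
  hu.add hv
lemma IsSmooth.mulf {u v : Fn} (hu : IsSmooth u) (hv : IsSmooth v) : IsSmooth (u * v) :=
  hu.mul hv
lemma IsSmooth.powf {u : Fn} (hu : IsSmooth u) (n : ℕ) : IsSmooth (u ^ n) :=
  hu.pow n
lemma Dx_add {u v : Fn} (hu : Differentiable ℝ u) (hv : Differentiable ℝ v) :
    Dx (u + v) = Dx u + Dx v := by
  funext p
  simp only [Dx, Pi.add_apply]
  rw [show (u + v) = fun q => u q + v q from rfl, fderiv_fun_add (hu p) (hv p)]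
  simp
lemma Dy_add {u v : Fn} (hu : Differentiable ℝ u) (hv : Differentiable ℝ v) :
    Dy (u + v) = Dy u + Dy v := by
  funext p
  simp only [Dy, Pi.add_apply]
  rw [show (u + v) = fun q => u q + v q from rfl, fderiv_fun_add (hu p) (hv p)]
  simp
lemma Dx_mul {u v : Fn} (hu : Differentiable ℝ u) (hv : Differentiable ℝ v) :
    Dx (u * v) = Dx u * v + u * Dx v := by
  funext p
  simp only [Dx, Pi.add_apply, Pi.mul_apply]
  rw [show (u * v) = fun q => u q * v q from rfl, fderiv_fun_mul (hu p) (hv p)]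
  simp; ring
lemma Dy_mul {u v : Fn} (hu : Differentiable ℝ u) (hv : Differentiable ℝ v) :
    Dy (u * v) = Dy u * v + u * Dy v := by
  funext p
  simp only [Dy, Pi.add_apply, Pi.mul_apply]
  rw [show (u * v) = fun q => u q * v q from rfl, fderiv_fun_mul (hu p) (hv p)]
  simp; ring
lemma Dx_yf : Dx yf = 0 := by
  funext p; rw [Dx, show yf = Prod.snd from rfl, fderiv_snd]; rfl
lemma Dy_yf : Dy yf = 1 := by
  funext p; rw [Dy, show yf = Prod.snd from rfl, fderiv_snd]; rfl
lemma Dxy_comm {u : Fn} (h : IsSmooth u) : Dx (Dy u) = Dy (Dx u) := by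
  funext p
  have hs : IsSymmSndFDerivAt ℝ u p := h.contDiffAt.isSymmSndFDerivAt (by norm_num; exact WithTop.coe_le_coe.mpr (le_top : (2:ℕ∞) ≤ ⊤))
  have key : ∀ w : ℝ × ℝ, fderiv ℝ (fun q => fderiv ℝ u q w) p =
      (fderiv ℝ (fderiv ℝ u) p).flip w := by
    intro w
    rw [show (fun q => fderiv ℝ u q w) = fun q => (fderiv ℝ u q) w from rfl,
      fderiv_clm_apply ((h.fderiv_right (m := (⊤ : ℕ∞)) (by simp)).differentiable (by simp) p)
        (differentiableAt_const w)]
    simp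
  show fderiv ℝ (fun q => fderiv ℝ u q (0,1)) p (1,0)
      = fderiv ℝ (fun q => fderiv ℝ u q (1,0)) p (0,1)
  rw [key (0,1), key (1,0)]
  exact hs (1,0) (0,1)

lemma Dx_yfmul {u : Fn} (hu : IsSmooth u) : Dx (yf * u) = yf * Dx u := by
  rw [Dx_mul smooth_yf.diffble hu.diffble, Dx_yf]; ring
lemma Dx_yf2mul {u : Fn} (hu : IsSmooth u) : Dx (yf ^ 2 * u) = yf ^ 2 * Dx u := by
  rw [show yf ^ 2 * u = yf * (yf * u) by ring,
    Dx_yfmul (smooth_yf.mulf hu), Dx_yfmul hu]; ring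
lemma Dy_yfmul {u : Fn} (hu : IsSmooth u) : Dy (yf * u) = u + yf * Dy u := by
  rw [Dy_mul smooth_yf.diffble hu.diffble, Dy_yf]; ring
lemma Dy_yf2mul {u : Fn} (hu : IsSmooth u) : Dy (yf ^ 2 * u) = 2 * yf * u + yf ^ 2 * Dy u := by
  rw [show yf ^ 2 * u = yf * (yf * u) by ring,
    Dy_yfmul (smooth_yf.mulf hu), Dy_yfmul hu]; ring

/-- The three compositions define the same third-order operator `L` (of principal
symbol `(X+Y)XY`) on smooth functions: `L` has a first-order left factor of symbol
`X+Y`, a first-order right factor of symbol `Y`, and a complete factorization into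
three first-order factors with exactly these outer factors. -/
theorem example_SXY_three_factorizations :
    ∀ u : Fn, IsSmooth u → comp1 u = comp2 u ∧ comp2 u = comp3 u := by
  intro u hu
  have hyu : IsSmooth (yf * u) := smooth_yf.mulf hu
  have hv : IsSmooth (Dy u + yf * u) := hu.dy.addf hyu
  set v : Fn := Dy u + yf * u with hvdef
  -- inner expression of comp3 = inner expression of comp1
  have hinner : Dx v + yf ^ 2 * v = Dx (Dy u) + yf * Dx u + yf ^ 2 * Dy u + yf ^ 3 * u := by
    rw [hvdef, Dx_add hu.dy.diffble hyu.diffble, Dx_yfmul hu]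
    ring
  have hw : IsSmooth (Dx v + yf ^ 2 * v) := hv.dx.addf ((smooth_yf.powf 2).mulf hv)
  have h13 : comp1 u = comp3 u := by
    unfold comp1 comp3
    beta_reduce
    rw [← hvdef, hinner]
  have h23 : comp2 u = comp3 u := by
    unfold comp2 comp3
    beta_reduce
    rw [← hvdef,
      Dx_add hv.dx.diffble ((smooth_yf.powf 2).mulf hv).diffble,
      Dy_add hv.dx.diffble ((smooth_yf.powf 2).mulf hv).diffble,
      Dx_yf2mul hv, Dy_yf2mul hv, ← Dxy_comm hv]
    ring
  exact ⟨h13.trans h23.symm, h23⟩
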